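/- Let M be a model category, n a natural number, and S a subset of {1,…,n}, and equip the functor category 2ⁿ ⥤ M with the model structure M^{2ⁿ}_S whose fibrations are the objectwise fibrations, whose weak equivalences are the maps τ with τ(x) a weak equivalence for every x with x_i = false for all i ∈ S, and whose cofibrations are the maps whose relative latching map at every x is a cofibration, and a trivial cofibration whenever x_i = true for some i ∈ S. Then a natural transformation τ : F → G is simultaneously a cofibration and a weak equivalence in M^{2ⁿ}_S if and only if for every x ∈ 2ⁿ the relative latching map of τ at x is a trivial cofibration in M. In particular, the class of trivial cofibrations of M^{2ⁿ}_S does not depend on S and coincides with that of the Reedy model structure M^{2ⁿ}_∅. -/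

import Mathlib

/-!
Grade the cube by the number of `true` coordinates. The Reedy lifting argument, an induction on
the grade, shows: if the relative latching maps of `τ` at all `y < x` are trivial cofibrations,
so is the induced map `L_x F ⟶ L_x G`, hence so is its cobase change `F x ⟶ L_x G ⊔_{L_x F} F x`,
and by two-out-of-three `τ x` is a weak equivalence iff the relative latching map at `x` is.
Given a trivial cofibration of `M^{2ⁿ}_S`, the relative latching map at `x` is trivial by the
cofibration condition if `x i = true` for some `i ∈ S`, and otherwise by the weak equivalence
condition and induction on `x`; the converse is the same observation read backwards.
-/

open CategoryTheory CategoryTheory.Limits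

universe v u

/-- `f` is a retract of `g` in the arrow category. -/
def IsRetract {C : Type u} [Category.{v} C] {X Y X' Y' : C} (f : X ⟶ Y) (g : X' ⟶ Y') : Prop :=
  ∃ (i : X ⟶ X') (r : X' ⟶ X) (i' : Y ⟶ Y') (r' : Y' ⟶ Y),
    i ≫ r = 𝟙 X ∧ i' ≫ r' = 𝟙 Y ∧ i ≫ g = f ≫ i' ∧ g ≫ r' = r ≫ f

/-- A model structure on a category: three classes of morphisms (weak equivalences,
cofibrations, fibrations) satisfying Quillen's axioms (two-out-of-three, closure
under retracts, lifting, and factorization). -/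
structure ModelStructure (C : Type u) [Category.{v} C] where
  W : MorphismProperty C
  Cof : MorphismProperty C
  Fib : MorphismProperty C
  w_comp : ∀ {X Y Z : C} (f : X ⟶ Y) (g : Y ⟶ Z), W f → W g → W (f ≫ g)
  w_cancel_left : ∀ {X Y Z : C} (f : X ⟶ Y) (g : Y ⟶ Z), W f → W (f ≫ g) → W g
  w_cancel_right : ∀ {X Y Z : C} (f : X ⟶ Y) (g : Y ⟶ Z), W g → W (f ≫ g) → W f
  w_retract : ∀ {X Y X' Y' : C} (f : X ⟶ Y) (g : X' ⟶ Y'), IsRetract f g → W g → W f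
  cof_retract : ∀ {X Y X' Y' : C} (f : X ⟶ Y) (g : X' ⟶ Y'), IsRetract f g → Cof g → Cof f
  fib_retract : ∀ {X Y X' Y' : C} (f : X ⟶ Y) (g : X' ⟶ Y'), IsRetract f g → Fib g → Fib f
  lift_cof_trivFib : ∀ {A B X Y : C} (i : A ⟶ B) (p : X ⟶ Y),
    Cof i → Fib p → W p → HasLiftingProperty i p
  lift_trivCof_fib : ∀ {A B X Y : C} (i : A ⟶ B) (p : X ⟶ Y),
    Cof i → W i → Fib p → HasLiftingProperty i p
  factor_cof_trivFib : ∀ {X Y : C} (f : X ⟶ Y), ∃ (Z : C) (g : X ⟶ Z) (h : Z ⟶ Y),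
    Cof g ∧ Fib h ∧ W h ∧ g ≫ h = f
  factor_trivCof_fib : ∀ {X Y : C} (f : X ⟶ Y), ∃ (Z : C) (g : X ⟶ Z) (h : Z ⟶ Y),
    Cof g ∧ W g ∧ Fib h ∧ g ≫ h = f

variable {M : Type u} [Category.{v} M]

/-- An object is cofibrant if the map from the initial object is a cofibration. -/
def ModelStructure.Cofibrant [HasInitial M] (m : ModelStructure M) (X : M) : Prop :=
  m.Cof (initial.to X)

section Latching

variable {P : Type} [Preorder P] [HasColimitsOfSize.{0, 0} M]

/-- The latching object of `F : P ⥤ M` at `x`: the colimit of `F` over the full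
subcategory of all `y < x`. -/
noncomputable def latchingObj (F : P ⥤ M) (x : P) : M :=
  colimit (ObjectProperty.ι (fun y : P => y < x) ⋙ F)

/-- The canonical (latching) map `L_x F ⟶ F x`. -/
noncomputable def latchingMap (F : P ⥤ M) (x : P) : latchingObj F x ⟶ F.obj x :=
  colimit.desc (ObjectProperty.ι (fun y : P => y < x) ⋙ F)
    { pt := F.obj x
      ι :=
        { app := fun y => F.map (homOfLE y.property.le)
          naturality := by
            intro a b f
            dsimp
            rw [Category.comp_id, ← F.map_comp]
            rfl } }

/-- The map induced by a natural transformation on latching objects. -/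
noncomputable def latchingObjHom {F G : P ⥤ M} (τ : F ⟶ G) (x : P) :
    latchingObj F x ⟶ latchingObj G x :=
  colimMap (Functor.whiskerLeft (ObjectProperty.ι (fun y : P => y < x)) τ)

lemma latching_square {F G : P ⥤ M} (τ : F ⟶ G) (x : P) :
    latchingMap F x ≫ τ.app x = latchingObjHom τ x ≫ latchingMap G x := by
  apply colimit.hom_ext
  intro y
  dsimp only [latchingMap, latchingObjHom, latchingObj]
  erw [colimit.ι_desc_assoc, ι_colimMap_assoc, colimit.ι_desc]
  simp

/-- The relative latching map of `τ : F ⟶ G` at `x`: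
the induced map `(L_x G) ⊔_{L_x F} F x ⟶ G x`. -/
noncomputable def relLatchingMap {F G : P ⥤ M} (τ : F ⟶ G) (x : P) :
    pushout (latchingMap F x) (latchingObjHom τ x) ⟶ G.obj x :=
  pushout.desc (τ.app x) (latchingMap G x) (latching_square τ x)

end Latching

namespace ModelStructure

variable {C : Type u} [Category.{v} C] (m : ModelStructure C)

def TrivCof : MorphismProperty C := fun _ _ j => m.Cof j ∧ m.W j

variable {m}

lemma TrivCof.hasLiftingProperty {X Y A B : C} {j : X ⟶ Y} (hj : m.TrivCof j) {p : A ⟶ B}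
    (hp : m.Fib p) : HasLiftingProperty j p :=
  m.lift_trivCof_fib j p hj.1 hj.2 hp

variable (m)

/-- The retract argument: factor `j = q ∘ i` with `i` a trivial cofibration and `q` a fibration;
lifting `j` against `q` exhibits `j` as a retract of `i`. -/
lemma trivCof_of_hasLiftingProperty {X Y : C} {j : X ⟶ Y}
    (h : ∀ ⦃A B : C⦄ (p : A ⟶ B), m.Fib p → HasLiftingProperty j p) : m.TrivCof j := by
  obtain ⟨Z, i, q, hi, hiW, hq, hfac⟩ := m.factor_trivCof_fib j
  have := h q hq
  have sq : CommSq i j q (𝟙 Y) := ⟨by rw [hfac, Category.comp_id]⟩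
  have hr : IsRetract j i :=
    ⟨𝟙 X, 𝟙 X, sq.lift, q, Category.comp_id _, sq.fac_right, by simp, by
      rw [hfac, Category.id_comp]⟩
  exact ⟨m.cof_retract j i hr hi, m.w_retract j i hr hiW⟩

lemma trivCof_pushout_inl {X Y Z : C} (f : X ⟶ Y) (g : X ⟶ Z) [HasPushout f g]
    (hg : m.TrivCof g) : m.TrivCof (pushout.inl f g) :=
  m.trivCof_of_hasLiftingProperty fun _ _ _ hp =>
    have := hg.hasLiftingProperty hp
    inferInstance

end ModelStructure

section LatchingLifts

variable [HasColimitsOfSize.{0, 0} M] {P : Type}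

section Preorder

variable [Preorder P] {F G : P ⥤ M} {x y z : P} {A B : M}

noncomputable def latchingι (F : P ⥤ M) (h : y < x) : F.obj y ⟶ latchingObj F x :=
  colimit.ι (ObjectProperty.ι (fun y : P => y < x) ⋙ F) ⟨y, h⟩

lemma latchingι_latchingMap (F : P ⥤ M) (h : y < x) :
    latchingι F h ≫ latchingMap F x = F.map (homOfLE h.le) :=
  colimit.ι_desc _ _

lemma latchingι_latchingObjHom (τ : F ⟶ G) (h : y < x) :
    latchingι F h ≫ latchingObjHom τ x = τ.app y ≫ latchingι G h :=
  ι_colimMap _ _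

lemma map_latchingι (F : P ⥤ M) (hzy : z ≤ y) (hy : y < x) :
    F.map (homOfLE hzy) ≫ latchingι F hy = latchingι F (hzy.trans_lt hy) :=
  colimit.w (ObjectProperty.ι (fun y : P => y < x) ⋙ F)
    (ObjectProperty.homMk (homOfLE hzy) : (⟨z, hzy.trans_lt hy⟩ :
      ObjectProperty.FullSubcategory (fun y : P => y < x)) ⟶ ⟨y, hy⟩)

lemma latchingObj_hom_ext {f f' : latchingObj F x ⟶ A}
    (h : ∀ y (hy : y < x), latchingι F hy ≫ f = latchingι F hy ≫ f') : f = f' :=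
  colimit.hom_ext fun y => h y.obj y.property

noncomputable def latchingDesc (ℓ : ∀ y, y < x → (F.obj y ⟶ A))
    (hℓ : ∀ z y (hzy : z ≤ y) (hy : y < x),
      F.map (homOfLE hzy) ≫ ℓ y hy = ℓ z (hzy.trans_lt hy)) :
    latchingObj F x ⟶ A :=
  colimit.desc (ObjectProperty.ι (fun y : P => y < x) ⋙ F)
    { pt := A
      ι :=
        { app := fun y => ℓ y.obj y.property
          naturality := fun z y η => by
            dsimp
            rw [Category.comp_id]
            exact hℓ z.obj y.obj (leOfHom η.hom) y.property } }

lemma latchingι_latchingDesc (ℓ : ∀ y, y < x → (F.obj y ⟶ A))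
    (hℓ : ∀ z y (hzy : z ≤ y) (hy : y < x),
      F.map (homOfLE hzy) ≫ ℓ y hy = ℓ z (hzy.trans_lt hy))
    (hy : y < x) : latchingι F hy ≫ latchingDesc ℓ hℓ = ℓ y hy :=
  colimit.ι_desc _ _

lemma pushout_inl_relLatchingMap (τ : F ⟶ G) (x : P) :
    pushout.inl _ _ ≫ relLatchingMap τ x = τ.app x :=
  pushout.inl_desc _ _ _

lemma exists_lift_of_relLatchingMap (τ : F ⟶ G) (y : P) (p : A ⟶ B)
    [HasLiftingProperty (relLatchingMap τ y) p] (a : F.obj y ⟶ A) (c : latchingObj G y ⟶ A)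
    (b : G.obj y ⟶ B) (hac : latchingMap F y ≫ a = latchingObjHom τ y ≫ c)
    (hab : a ≫ p = τ.app y ≫ b) (hcb : c ≫ p = latchingMap G y ≫ b) :
    ∃ L : G.obj y ⟶ A, τ.app y ≫ L = a ∧ latchingMap G y ≫ L = c ∧ L ≫ p = b := by
  have sq : CommSq (pushout.desc a c hac) (relLatchingMap τ y) p b :=
    ⟨pushout.hom_ext
      (by rw [pushout.inl_desc_assoc, ← Category.assoc, pushout_inl_relLatchingMap, hab])
      (by rw [pushout.inr_desc_assoc, ← Category.assoc, relLatchingMap, pushout.inr_desc, hcb])⟩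
  refine ⟨sq.lift, ?_, ?_, sq.fac_right⟩
  · rw [← pushout_inl_relLatchingMap, Category.assoc, sq.fac_left, pushout.inl_desc]
  · rw [← pushout.inr_desc (τ.app y) (latchingMap G y) (latching_square τ y), Category.assoc,
      ← relLatchingMap, sq.fac_left, pushout.inr_desc]

variable {τ : F ⟶ G} {p : A ⟶ B} {f : latchingObj F x ⟶ A} {g : latchingObj G x ⟶ B}
  {deg : P → ℕ}

variable (τ p f g deg) in
def IsPartialLatchingLift (k : ℕ) (ℓ : ∀ y, y < x → deg y < k → (G.obj y ⟶ A)) : Prop :=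
  ∀ y (hy : y < x) (hk : deg y < k),
    (∀ z (hzy : z ≤ y) (hzk : deg z < k),
      G.map (homOfLE hzy) ≫ ℓ y hy hk = ℓ z (hzy.trans_lt hy) hzk) ∧
    τ.app y ≫ ℓ y hy hk = latchingι F hy ≫ f ∧ ℓ y hy hk ≫ p = latchingι G hy ≫ g

end Preorder

section PartialOrder

variable [PartialOrder P] {F G : P ⥤ M} {x : P} {A B : M} {τ : F ⟶ G} {p : A ⟶ B}
  {f : latchingObj F x ⟶ A} {g : latchingObj G x ⟶ B} {deg : P → ℕ}

/-- At each `y` of degree `k` the lifts already built assemble to a map out of `latchingObj G y`,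
which together with `f` and `g` poses a lifting problem for `relLatchingMap τ y` against `p`. -/
lemma IsPartialLatchingLift.exists_succ (hdeg : StrictMono deg) {k : ℕ}
    {ℓ : ∀ y, y < x → deg y < k → (G.obj y ⟶ A)} (hℓ : IsPartialLatchingLift τ p f g deg k ℓ)
    (sq : f ≫ p = latchingObjHom τ x ≫ g)
    (hlift : ∀ y, y < x → deg y = k → HasLiftingProperty (relLatchingMap τ y) p) :
    ∃ ℓ', IsPartialLatchingLift τ p f g deg (k + 1) ℓ' := by
  have extend : ∀ y (hy : y < x) (hk : deg y = k), ∃ L : G.obj y ⟶ A,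
      (∀ z (hzy : z < y), G.map (homOfLE hzy.le) ≫ L = ℓ z (hzy.trans hy) (hk ▸ hdeg hzy)) ∧
      τ.app y ≫ L = latchingι F hy ≫ f ∧ L ≫ p = latchingι G hy ≫ g := by
    intro y hy hk
    let c : latchingObj G y ⟶ A :=
      latchingDesc (fun z hz => ℓ z (hz.trans hy) (hk ▸ hdeg hz))
        fun z' z hz'z hz => (hℓ z _ _).1 z' hz'z _
    have hc : ∀ z (hz : z < y), latchingι G hz ≫ c = ℓ z (hz.trans hy) (hk ▸ hdeg hz) :=
      fun z hz => latchingι_latchingDesc _ _ hz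
    have hac : latchingMap F y ≫ latchingι F hy ≫ f = latchingObjHom τ y ≫ c := by
      refine latchingObj_hom_ext fun z hz => ?_
      rw [← Category.assoc, latchingι_latchingMap, ← Category.assoc, map_latchingι,
        ← Category.assoc, latchingι_latchingObjHom, Category.assoc, hc, (hℓ z _ _).2.1]
    have hab : (latchingι F hy ≫ f) ≫ p = τ.app y ≫ latchingι G hy ≫ g := by
      rw [Category.assoc, sq, ← Category.assoc, latchingι_latchingObjHom, Category.assoc]
    have hcb : c ≫ p = latchingMap G y ≫ latchingι G hy ≫ g := by
      refine latchingObj_hom_ext fun z hz => ?_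
      rw [← Category.assoc, hc, (hℓ z _ _).2.2, ← Category.assoc, latchingι_latchingMap,
        ← Category.assoc, map_latchingι]
    have := hlift y hy hk
    obtain ⟨L, hLτ, hLc, hLp⟩ := exists_lift_of_relLatchingMap τ y p _ c _ hac hab hcb
    refine ⟨L, fun z hzy => ?_, hLτ, hLp⟩
    rw [← latchingι_latchingMap G hzy, Category.assoc, hLc, hc]
  choose L hL using extend
  refine ⟨fun y hy hk => if h : deg y < k then ℓ y hy h else L y hy (by omega), ?_⟩
  intro y hy hk
  dsimp only
  by_cases h : deg y < k
  · obtain ⟨hnat, hτ, hp⟩ := hℓ y hy h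
    rw [dif_pos h]
    refine ⟨fun z hzy hzk => ?_, hτ, hp⟩
    rw [dif_pos ((hdeg.monotone hzy).trans_lt h)]
    exact hnat z hzy _
  · obtain ⟨hnat, hτ, hp⟩ := hL y hy (by omega)
    rw [dif_neg h]
    refine ⟨fun z hzy hzk => ?_, hτ, hp⟩
    rcases hzy.eq_or_lt with rfl | hzy
    · rw [dif_neg h, show homOfLE hzy = 𝟙 z from rfl, G.map_id, Category.id_comp]
    · rw [dif_pos (by have := hdeg hzy; omega)]
      exact hnat z hzy

lemma latchingObjHom_hasLiftingProperty (hdeg : StrictMono deg)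
    (h : ∀ y, y < x → HasLiftingProperty (relLatchingMap τ y) p) :
    HasLiftingProperty (latchingObjHom τ x) p where
  sq_hasLift {f g} sq := by
    have partialLift : ∀ k, ∃ ℓ, IsPartialLatchingLift τ p f g deg k ℓ := by
      intro k
      induction k with
      | zero => exact ⟨fun _ _ hk => absurd hk (Nat.not_lt_zero _),
          fun _ _ hk => absurd hk (Nat.not_lt_zero _)⟩
      | succ k ih =>
        obtain ⟨ℓ, hℓ⟩ := ih
        exact hℓ.exists_succ hdeg sq.w fun y hy _ => h y hy
    obtain ⟨ℓ, hℓ⟩ := partialLift (deg x)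
    refine ⟨⟨⟨latchingDesc (fun y hy => ℓ y hy (hdeg hy))
      (fun z y hzy hy => (hℓ y hy _).1 z hzy (hdeg (hzy.trans_lt hy))), ?_, ?_⟩⟩⟩
    · refine latchingObj_hom_ext fun y hy => ?_
      rw [← Category.assoc, latchingι_latchingObjHom, Category.assoc, latchingι_latchingDesc,
        (hℓ y hy _).2.1]
    · refine latchingObj_hom_ext fun y hy => ?_
      rw [← Category.assoc, latchingι_latchingDesc, (hℓ y hy _).2.2]

end PartialOrder

section TrivialCofibrations

variable [PartialOrder P] {F G : P ⥤ M} {deg : P → ℕ} (m : ModelStructure M)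

lemma latchingObjHom_trivCof (hdeg : StrictMono deg) (τ : F ⟶ G) (x : P)
    (h : ∀ y, y < x → m.TrivCof (relLatchingMap τ y)) : m.TrivCof (latchingObjHom τ x) :=
  m.trivCof_of_hasLiftingProperty fun _ _ _ hp =>
    latchingObjHom_hasLiftingProperty hdeg fun y hy => (h y hy).hasLiftingProperty hp

/-- `τ.app x` is the trivial cofibration `pushout.inl` followed by `relLatchingMap τ x`. -/
lemma w_app_iff_w_relLatchingMap (hdeg : StrictMono deg) (τ : F ⟶ G) (x : P)
    (h : ∀ y, y < x → m.TrivCof (relLatchingMap τ y)) :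
    m.W (τ.app x) ↔ m.W (relLatchingMap τ x) := by
  have hinl := m.trivCof_pushout_inl (latchingMap F x) _ (latchingObjHom_trivCof m hdeg τ x h)
  rw [← pushout_inl_relLatchingMap τ x]
  exact ⟨m.w_cancel_left _ _ hinl.2, m.w_comp _ _ hinl.2⟩

end TrivialCofibrations

end LatchingLifts

lemma strictMono_sum_comp {ι α : Type*} [Fintype ι] [PartialOrder α] {f : α → ℕ}
    (hf : StrictMono f) : StrictMono fun x : ι → α => ∑ i, f (x i) := fun _ _ hxy =>
  let ⟨hle, i, hi⟩ := Pi.lt_def.1 hxy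
  Finset.sum_lt_sum (fun j _ => hf.monotone (hle j)) ⟨i, Finset.mem_univ i, hf hi⟩

lemma Bool.strictMono_toNat : StrictMono Bool.toNat := by
  decide

attribute [local instance 2000] Preorder.smallCategory

theorem statement4_general [HasColimits M] (m : ModelStructure M)
    (n : ℕ) (S : Set (Fin n)) (σ : ModelStructure ((Fin n → Bool) ⥤ M))
    (hW : ∀ {F G : (Fin n → Bool) ⥤ M} (τ : F ⟶ G),
      σ.W τ ↔ ∀ x : Fin n → Bool, (∀ i ∈ S, x i = false) → m.W (τ.app x))
    (hCof : ∀ {F G : (Fin n → Bool) ⥤ M} (τ : F ⟶ G),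
      σ.Cof τ ↔ ∀ x : Fin n → Bool, m.Cof (relLatchingMap τ x) ∧
        ((∃ i ∈ S, x i = true) →
          m.Cof (relLatchingMap τ x) ∧ m.W (relLatchingMap τ x))) :
    ∀ {F G : (Fin n → Bool) ⥤ M} (τ : F ⟶ G),
      (σ.Cof τ ∧ σ.W τ) ↔
        ∀ x : Fin n → Bool, m.Cof (relLatchingMap τ x) ∧ m.W (relLatchingMap τ x) := by
  intro F G τ
  have hdeg := strictMono_sum_comp (ι := Fin n) Bool.strictMono_toNat
  constructor
  · rintro ⟨hcof, hw⟩ x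
    induction x using WellFoundedLT.induction with | ind x ih
    refine ⟨((hCof τ).1 hcof x).1, ?_⟩
    by_cases hxS : ∃ i ∈ S, x i = true
    · exact (((hCof τ).1 hcof x).2 hxS).2
    · have hxS : ∀ i ∈ S, x i = false := by simpa using hxS
      exact (w_app_iff_w_relLatchingMap m hdeg τ x ih).1 ((hW τ).1 hw x hxS)
  · intro h
    refine ⟨(hCof τ).2 fun x => ⟨(h x).1, fun _ => h x⟩, (hW τ).2 fun x _ => ?_⟩
    exact (w_app_iff_w_relLatchingMap m hdeg τ x fun y _ => h y).2 (h x).2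

/-- In the model structure `M^{2ⁿ}_S` on `2ⁿ ⥤ M` (objectwise
fibrations; weak equivalences tested at all `x` with `x i = false` for `i ∈ S`;
cofibrations the maps whose relative latching maps are cofibrations, trivial whenever
`x i = true` for some `i ∈ S`), a map `τ` is a trivial cofibration if and only if all
its relative latching maps are trivial cofibrations in `M`.  In particular the class
of trivial cofibrations does not depend on `S` and agrees with that of the Reedy model
structure `M^{2ⁿ}_∅`. -/
theorem statement4 [HasLimits M] [HasColimits M] (m : ModelStructure M)
    (n : ℕ) (S : Set (Fin n)) (σ : ModelStructure ((Fin n → Bool) ⥤ M))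
    (hFib : ∀ {F G : (Fin n → Bool) ⥤ M} (τ : F ⟶ G),
      σ.Fib τ ↔ ∀ x : Fin n → Bool, m.Fib (τ.app x))
    (hW : ∀ {F G : (Fin n → Bool) ⥤ M} (τ : F ⟶ G),
      σ.W τ ↔ ∀ x : Fin n → Bool, (∀ i ∈ S, x i = false) → m.W (τ.app x))
    (hCof : ∀ {F G : (Fin n → Bool) ⥤ M} (τ : F ⟶ G),
      σ.Cof τ ↔ ∀ x : Fin n → Bool, m.Cof (relLatchingMap τ x) ∧
        ((∃ i ∈ S, x i = true) →
          m.Cof (relLatchingMap τ x) ∧ m.W (relLatchingMap τ x))) :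
    ∀ {F G : (Fin n → Bool) ⥤ M} (τ : F ⟶ G),
      (σ.Cof τ ∧ σ.W τ) ↔
        ∀ x : Fin n → Bool, m.Cof (relLatchingMap τ x) ∧ m.W (relLatchingMap τ x) :=
  statement4_general m n S σ hW hCof
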